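/- arXiv:1804.01865 — 2 statements merged into one kernel-verified Lean document; each statement's English description precedes it below -/
import Mathlib

section
/- Let A generate a strongly continuous semigroup e^{At} on a Banach space X, let N ∈ C¹([0,T]), α > 0, and let w ∈ C([0,T]; X) satisfy the mild Coleman–Gurtin equation w(t) = u(t) + ∫₀ᵗ e^{αA(t-s)} ∫₀ˢ N(s-r) A w(r) dr ds, where u(t) = e^{αAt} w₀, and assume w(t) ∈ dom A with Aw continuous. Then after an integration by parts w satisfies the Volterra equation w(t) = u(t) − (1/α) ∫₀ᵗ N(t-r) w(r) dr + (1/α) ∫₀ᵗ e^{αA(t-s)} [ N(0) w(s) + ∫₀ˢ N'(s-r) w(r) dr ] ds, in which the operator A no longer appears. -/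
/-! For fixed `r`, the map `s ↦ N (s - r) • S (t - s) (w r)` has derivative
`N' (s - r) • S (t - s) (w r) - α N (s - r) • S (t - s) (A (w r))`, so integrating it over
`s ∈ [r, t]` trades the `A`-term for the boundary terms `N 0 • S (t - r) (w r) - N (t - r) • w r`
and an `N'`-term. Exchanging the order of integration over the triangle `0 ≤ r ≤ s ≤ t` before and
after this step gives the claim; Fubini applies because strong continuity and Banach–Steinhaus make
`(τ, x) ↦ S τ x` jointly continuous. -/

open MeasureTheory Set

theorem ContinuousLinearMap.continuous_uncurry_of_continuous_apply
    {𝕜 Y E F : Type*} [NontriviallyNormedField 𝕜] [TopologicalSpace Y] [LocallyCompactSpace Y]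
    [NormedAddCommGroup E] [NormedSpace 𝕜 E] [CompleteSpace E]
    [NormedAddCommGroup F] [NormedSpace 𝕜 F]
    (S : Y → E →L[𝕜] F) (hS : ∀ x, Continuous fun y => S y x) :
    Continuous fun p : Y × E => S p.1 p.2 := by
  refine continuous_iff_continuousAt.2 fun ⟨y₀, x₀⟩ => ?_
  obtain ⟨K, hKc, hK⟩ := exists_compact_mem_nhds y₀
  obtain ⟨C, hC⟩ : ∃ C, ∀ y : K, ‖S y‖ ≤ C := banach_steinhaus fun x =>
    (hKc.exists_bound_of_continuousOn (hS x).continuousOn).imp fun _ hC y => hC y y.2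
  have hLip : ∀ y ∈ K, LipschitzOnWith C.toNNReal (S y) univ := fun y hy =>
    ((S y).lipschitz.weaken (by simpa using Real.toNNReal_le_toNNReal (hC ⟨y, hy⟩))).lipschitzOnWith
  exact (continuousOn_prod_of_continuousOn_lipschitzOnWith' (fun p : Y × E => S p.1 p.2) _ hLip
    fun x _ => (hS x).continuousOn).continuousAt (prod_mem_nhds hK Filter.univ_mem)

theorem intervalIntegral.integral_integral_swap_triangle {E : Type*} [NormedAddCommGroup E]
    [NormedSpace ℝ E] {g : ℝ → ℝ → E} (hg : Continuous (Function.uncurry g)) {a b : ℝ}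
    (hab : a ≤ b) :
    ∫ s in a..b, ∫ r in a..s, g s r = ∫ r in a..b, ∫ s in r..b, g s r := by
  set f : ℝ × ℝ → E := {p | p.2 ≤ p.1}.indicator (Function.uncurry g)
  have hf : Integrable f ((volume.restrict (Ioc a b)).prod (volume.restrict (Ioc a b))) := by
    rw [Measure.prod_restrict]
    refine (IntegrableOn.mono_set ?_ (prod_mono Ioc_subset_Icc_self Ioc_subset_Icc_self)).indicator
      (measurableSet_le continuous_snd.measurable continuous_fst.measurable)
    exact hg.continuousOn.integrableOn_compact (isCompact_Icc.prod isCompact_Icc)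
  have inner_left : EqOn (fun s => ∫ r in a..s, g s r) (fun s => ∫ r in Ioc a b, f (s, r))
      (Ioc a b) := fun s hs => by
    have : (fun r => f (s, r)) = (Iic s).indicator (g s) := by
      ext r; simp [f, indicator_apply]
    simp only [this, integral_of_le hs.1.le, setIntegral_indicator measurableSet_Iic,
      Ioc_inter_Iic, min_eq_right hs.2]
  have inner_right : EqOn (fun r => ∫ s in r..b, g s r) (fun r => ∫ s in Ioc a b, f (s, r))
      (Ioc a b) := fun r hr => by
    have : (fun s => f (s, r)) = (Ici r).indicator (g · r) := by
      ext s; simp [f, indicator_apply]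
    have hIcc : Ioc a b ∩ Ici r = Icc r b := by
      ext s; simp only [mem_inter_iff, mem_Ioc, mem_Ici, mem_Icc]
      exact ⟨fun h => ⟨h.2, h.1.2⟩, fun h => ⟨⟨hr.1.trans_le h.1, h.2⟩, h.1⟩⟩
    simp only [this, integral_of_le hr.2, setIntegral_indicator measurableSet_Ici, hIcc,
      integral_Icc_eq_integral_Ioc]
  rw [intervalIntegral.integral_of_le hab, intervalIntegral.integral_of_le hab,
    setIntegral_congr_fun measurableSet_Ioc inner_left,
    setIntegral_congr_fun measurableSet_Ioc inner_right]
  exact integral_integral_swap hf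

theorem intervalIntegral.integral_comp_sub_smul_deriv_comp_sub {E : Type*} [NormedAddCommGroup E]
    [NormedSpace ℝ E] [CompleteSpace E] {N : ℝ → ℝ} (hN : ContDiff ℝ 1 N) {f f' : ℝ → E}
    (hf : ∀ τ, HasDerivAt f (f' τ) τ) (hf' : Continuous f') (r t : ℝ) :
    ∫ s in r..t, N (s - r) • f' (t - s)
      = N 0 • f (t - r) - N (t - r) • f 0 + ∫ s in r..t, deriv N (s - r) • f (t - s) := by
  have hu : ∀ s, HasDerivAt (fun s => N (s - r)) (deriv N (s - r)) s := fun s =>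
    (hN.differentiable one_ne_zero _).hasDerivAt.comp_sub_const s r
  have hv : ∀ s, HasDerivAt (fun s => -f (t - s)) (f' (t - s)) s := fun s => by
    simpa using ((hf (t - s)).comp_const_sub t s).fun_neg
  have parts := integral_smul_deriv_eq_deriv_smul (fun s _ => hu s) (fun s _ => hv s)
    (((hN.continuous_deriv le_rfl).comp (continuous_sub_right r)).intervalIntegrable r t)
    ((hf'.comp (continuous_sub_left t)).intervalIntegrable r t)
  simp only [sub_self, smul_neg, integral_neg] at parts
  rw [parts]
  abel

theorem ContinuousLinearMap.intervalIntegral_smul_comp_comm {E F : Type*} [NormedAddCommGroup E]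
    [NormedSpace ℝ E] [CompleteSpace E] [NormedAddCommGroup F] [NormedSpace ℝ F]
    [CompleteSpace F] (L : E →L[ℝ] F) {c : ℝ → ℝ} {φ : ℝ → E} {a b : ℝ}
    (h : IntervalIntegrable (fun r => c r • φ r) volume a b) :
    L (∫ r in a..b, c r • φ r) = ∫ r in a..b, c r • L (φ r) := by
  simp only [← L.intervalIntegral_comp_comm h, map_smul]

section SemigroupConvolution

variable {X : Type*} [NormedAddCommGroup X] [NormedSpace ℝ X] [CompleteSpace X]
  {S : ℝ → X →L[ℝ] X} {N : ℝ → ℝ} {w v : ℝ → X} {α t : ℝ}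

theorem integral_integral_semigroup_convolution_by_parts
    (hS0 : S 0 = ContinuousLinearMap.id ℝ X) (hS : Continuous fun p : ℝ × X => S p.1 p.2)
    (hN : ContDiff ℝ 1 N) (hw : Continuous w) (hv : Continuous v)
    (hderiv : ∀ r τ, HasDerivAt (fun τ => S τ (w r)) (α • S τ (v r)) τ) (ht : 0 ≤ t) :
    α • ∫ s in 0..t, ∫ r in 0..s, N (s - r) • S (t - s) (v r)
      = (∫ s in 0..t, N 0 • S (t - s) (w s)) - (∫ r in 0..t, N (t - r) • w r)
        + ∫ s in 0..t, ∫ r in 0..s, deriv N (s - r) • S (t - s) (w r) := by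
  have hbdry : Continuous fun s => N 0 • S (t - s) (w s) :=
    (hS.comp ((continuous_sub_left t).prodMk hw)).const_smul _
  have hend : Continuous fun r => N (t - r) • w r :=
    (hN.continuous.comp (continuous_sub_left t)).smul hw
  have hK : Continuous (Function.uncurry fun s r => N (s - r) • S (t - s) (v r)) :=
    (hN.continuous.comp (continuous_fst.sub continuous_snd)).smul
      (hS.comp ((continuous_const.sub continuous_fst).prodMk (hv.comp continuous_snd)))
  have hK' : Continuous (Function.uncurry fun s r => deriv N (s - r) • S (t - s) (w r)) :=
    ((hN.continuous_deriv le_rfl).comp (continuous_fst.sub continuous_snd)).smul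
      (hS.comp ((continuous_const.sub continuous_fst).prodMk (hw.comp continuous_snd)))
  have by_parts : ∀ r, α • ∫ s in r..t, N (s - r) • S (t - s) (v r)
      = N 0 • S (t - r) (w r) - N (t - r) • w r
        + ∫ s in r..t, deriv N (s - r) • S (t - s) (w r) := fun r => by
    have := intervalIntegral.integral_comp_sub_smul_deriv_comp_sub hN (hderiv r)
      ((hS.comp (continuous_id.prodMk continuous_const)).const_smul α) r t
    simpa only [hS0, sub_self, ContinuousLinearMap.id_apply, smul_comm _ α,
      intervalIntegral.integral_smul] using this
  have inner_cont : Continuous fun r => ∫ s in r..t, deriv N (s - r) • S (t - s) (w r) := by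
    have : Continuous fun r => ∫ s in t..r, deriv N (s - r) • S (t - s) (w r) :=
      intervalIntegral.continuous_parametric_intervalIntegral_of_continuous
        (f := fun r s => deriv N (s - r) • S (t - s) (w r)) (hK'.comp continuous_swap)
        continuous_id
    exact this.neg.congr fun r => (intervalIntegral.integral_symm t r).symm
  rw [intervalIntegral.integral_integral_swap_triangle hK ht,
    intervalIntegral.integral_integral_swap_triangle hK' ht, ← intervalIntegral.integral_smul,
    intervalIntegral.integral_congr fun r _ => by_parts r,
    intervalIntegral.integral_add ((hbdry.fun_sub hend).intervalIntegrable 0 t)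
      (inner_cont.intervalIntegrable 0 t),
    intervalIntegral.integral_sub (hbdry.intervalIntegrable 0 t) (hend.intervalIntegrable 0 t)]

theorem integral_semigroup_convolution_by_parts
    (hS0 : S 0 = ContinuousLinearMap.id ℝ X) (hS : Continuous fun p : ℝ × X => S p.1 p.2)
    (hN : ContDiff ℝ 1 N) (hw : Continuous w) (hv : Continuous v)
    (hderiv : ∀ r τ, HasDerivAt (fun τ => S τ (w r)) (α • S τ (v r)) τ) (ht : 0 ≤ t) :
    α • ∫ s in 0..t, S (t - s) (∫ r in 0..s, N (s - r) • v r)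
      = (∫ s in 0..t, S (t - s) (N 0 • w s + ∫ r in 0..s, deriv N (s - r) • w r))
        - ∫ r in 0..t, N (t - r) • w r := by
  have comm : ∀ {c : ℝ → ℝ} {φ : ℝ → X}, Continuous c → Continuous φ → ∀ s,
      S (t - s) (∫ r in 0..s, c (s - r) • φ r) = ∫ r in 0..s, c (s - r) • S (t - s) (φ r) :=
    fun hc hφ s => (S (t - s)).intervalIntegral_smul_comp_comm
      (((hc.comp (continuous_sub_left s)).smul hφ).intervalIntegrable 0 s)
  have split : ∀ s, S (t - s) (N 0 • w s + ∫ r in 0..s, deriv N (s - r) • w r)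
      = N 0 • S (t - s) (w s) + ∫ r in 0..s, deriv N (s - r) • S (t - s) (w r) :=
    fun s => by rw [map_add, map_smul, comm (hN.continuous_deriv le_rfl) hw]
  have hbdry : Continuous fun s => N 0 • S (t - s) (w s) :=
    (hS.comp ((continuous_sub_left t).prodMk hw)).const_smul _
  have hdouble : Continuous fun s => ∫ r in 0..s, deriv N (s - r) • S (t - s) (w r) :=
    intervalIntegral.continuous_parametric_intervalIntegral_of_continuous
      (((hN.continuous_deriv le_rfl).comp (continuous_fst.sub continuous_snd)).smul
        (hS.comp ((continuous_const.sub continuous_fst).prodMk (hw.comp continuous_snd))))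
      continuous_id
  simp_rw [comm hN.continuous hv]
  rw [intervalIntegral.integral_congr fun s _ => split s,
    intervalIntegral.integral_add (hbdry.intervalIntegrable 0 t) (hdouble.intervalIntegrable 0 t),
    integral_integral_semigroup_convolution_by_parts hS0 hS hN hw hv hderiv ht]
  abel

end SemigroupConvolution

theorem coleman_gurtin_A_free_reduction_general
    {X : Type*} [NormedAddCommGroup X] [NormedSpace ℝ X] [CompleteSpace X]
    (T α : ℝ) (hα : 0 < α)
    (S : ℝ → X →L[ℝ] X)
    (hS0 : S 0 = ContinuousLinearMap.id ℝ X)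
    (hScont : ∀ x : X, Continuous fun t => S t x)
    (D : Submodule ℝ X) (A : D →ₗ[ℝ] X)
    (hgen : ∀ (x : D) (t : ℝ), HasDerivAt (fun τ => S τ (x : X)) (α • S t (A x)) t)
    (N : ℝ → ℝ) (hN : ContDiff ℝ 1 N)
    (w : ℝ → X) (w₀ : X) (hw : Continuous w) (hmem : ∀ t, w t ∈ D)
    (hAw : Continuous fun t => A ⟨w t, hmem t⟩)
    (hmild : ∀ t ∈ Set.Icc (0 : ℝ) T,
        w t = S t w₀
          + ∫ s in (0 : ℝ)..t, S (t - s)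
              (∫ r in (0 : ℝ)..s, N (s - r) • A ⟨w r, hmem r⟩)) :
    ∀ t ∈ Set.Icc (0 : ℝ) T,
      w t = S t w₀ - (1 / α) • (∫ r in (0 : ℝ)..t, N (t - r) • w r)
        + (1 / α) • ∫ s in (0 : ℝ)..t, S (t - s)
            (N 0 • w s + ∫ r in (0 : ℝ)..s, deriv N (s - r) • w r) := by
  intro t ht
  have hS := ContinuousLinearMap.continuous_uncurry_of_continuous_apply S hScont
  have by_parts := integral_semigroup_convolution_by_parts hS0 hS hN hw hAw
    (fun r => hgen ⟨w r, hmem r⟩) ht.1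
  rw [hmild t ht, (eq_inv_smul_iff₀ hα.ne').2 by_parts, one_div, smul_sub]
  abel

/-- Reduction of the mild Coleman–Gurtin equation to an `A`-free Volterra equation:
if `S t = e^{αAt}` is the semigroup generated by `αA` (`α > 0`) and `w` satisfies
`w t = S t w₀ + ∫₀ᵗ S (t-s) ∫₀ˢ N (s-r) A (w r) dr ds` with values in `dom A`,
then after an integration by parts
`w t = S t w₀ - (1/α) ∫₀ᵗ N (t-r) w r dr
      + (1/α) ∫₀ᵗ S (t-s) [N 0 • w s + ∫₀ˢ N' (s-r) w r dr] ds`,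
in which the operator `A` no longer appears. -/
theorem coleman_gurtin_A_free_reduction
    {X : Type*} [NormedAddCommGroup X] [NormedSpace ℝ X] [CompleteSpace X]
    (T α : ℝ) (hT : 0 < T) (hα : 0 < α)
    (S : ℝ → X →L[ℝ] X)
    (hS0 : S 0 = ContinuousLinearMap.id ℝ X)
    (hSadd : ∀ s t : ℝ, S (s + t) = (S s).comp (S t))
    (hScont : ∀ x : X, Continuous fun t => S t x)
    (D : Submodule ℝ X) (A : D →ₗ[ℝ] X)
    (hgen : ∀ (x : D) (t : ℝ), HasDerivAt (fun τ => S τ (x : X)) (α • S t (A x)) t)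
    (N : ℝ → ℝ) (hN : ContDiff ℝ 1 N)
    (w : ℝ → X) (w₀ : X) (hw : Continuous w) (hmem : ∀ t, w t ∈ D)
    (hAw : Continuous fun t => A ⟨w t, hmem t⟩)
    (hmild : ∀ t ∈ Set.Icc (0 : ℝ) T,
        w t = S t w₀
          + ∫ s in (0 : ℝ)..t, S (t - s)
              (∫ r in (0 : ℝ)..s, N (s - r) • A ⟨w r, hmem r⟩)) :
    ∀ t ∈ Set.Icc (0 : ℝ) T,
      w t = S t w₀ - (1 / α) • (∫ r in (0 : ℝ)..t, N (t - r) • w r)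
        + (1 / α) • ∫ s in (0 : ℝ)..t, S (t - s)
            (N 0 • w s + ∫ r in (0 : ℝ)..s, deriv N (s - r) • w r) :=
  coleman_gurtin_A_free_reduction_general T α hα S hS0 hScont D A hgen N hN w w₀ hw hmem hAw hmild
end

section
/- Let f : [0,∞) → ℂ be continuous with |f(t)| ≤ M e^{at}, and suppose the Laplace transform f̂(λ) = ∫₀^∞ e^{-λt} f(t) dt vanishes for all real λ > a. Then f ≡ 0. -/
/-!
Substituting `u = exp (-t)` turns `f` into a function on `(0, 1)`, bounded thanks to the weight
`u ^ a`, whose `n`-th moment is the Laplace transform of `f` at `n + a + 1`. All its moments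
therefore vanish; by the Weierstrass approximation theorem it then integrates to zero against
every continuous function, hence vanishes almost everywhere, and by continuity everywhere.
-/

open MeasureTheory Set Real Polynomial

section Moments

variable {E : Type*} [NormedAddCommGroup E] [NormedSpace ℝ E] {μ : Measure ℝ} {S : Set ℝ}
  {g : ℝ → E}

theorem Bornology.IsBounded.integrableOn_continuous_smul (hS : Bornology.IsBounded S)
    (hSm : MeasurableSet S) (hg : IntegrableOn g S μ) {φ : ℝ → ℝ} (hφ : Continuous φ) :
    IntegrableOn (fun x ↦ φ x • g x) S μ :=
  hg.continuousOn_smul_of_subset hφ.continuousOn hS.isCompact_closure hSm subset_closure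

theorem integral_eval_smul_eq_zero_of_integral_pow_smul_eq_zero (hS : Bornology.IsBounded S)
    (hSm : MeasurableSet S) (hg : IntegrableOn g S μ)
    (hmom : ∀ n : ℕ, ∫ x in S, x ^ n • g x ∂μ = 0) (p : ℝ[X]) :
    ∫ x in S, p.eval x • g x ∂μ = 0 := by
  induction p using Polynomial.induction_on' with
  | add p q hp hq =>
    simp only [eval_add, add_smul]
    rw [integral_add (hS.integrableOn_continuous_smul hSm hg p.continuous)
      (hS.integrableOn_continuous_smul hSm hg q.continuous), hp, hq, add_zero]
  | monomial n c =>
    simp only [eval_monomial, mul_smul]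
    rw [integral_smul, hmom, smul_zero]

theorem integral_smul_eq_zero_of_integral_pow_smul_eq_zero (hS : Bornology.IsBounded S)
    (hSm : MeasurableSet S) (hg : IntegrableOn g S μ)
    (hmom : ∀ n : ℕ, ∫ x in S, x ^ n • g x ∂μ = 0) {φ : ℝ → ℝ} (hφ : Continuous φ) :
    ∫ x in S, φ x • g x ∂μ = 0 := by
  set C := ∫ x in S, ‖g x‖ ∂μ
  have hC : 0 ≤ C := integral_nonneg fun _ ↦ norm_nonneg _
  have approx : ∀ δ > 0, ‖∫ x in S, φ x • g x ∂μ‖ ≤ δ * C := by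
    intro δ hδ
    obtain ⟨p, hp⟩ := exists_polynomial_near_of_continuousOn _ _ φ hφ.continuousOn δ hδ
    have hdiff : ∫ x in S, φ x • g x ∂μ = ∫ x in S, (φ x - p.eval x) • g x ∂μ := by
      simp only [sub_smul]
      rw [integral_sub (hS.integrableOn_continuous_smul hSm hg hφ)
        (hS.integrableOn_continuous_smul hSm hg p.continuous),
        integral_eval_smul_eq_zero_of_integral_pow_smul_eq_zero hS hSm hg hmom, sub_zero]
    rw [hdiff, ← integral_const_mul]
    refine norm_integral_le_of_norm_le (hg.norm.const_mul δ) (ae_restrict_of_forall_mem hSm ?_)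
    intro x hx
    rw [norm_smul, Real.norm_eq_abs, abs_sub_comm]
    exact mul_le_mul_of_nonneg_right (hp x (hS.subset_Icc_sInf_sSup hx)).le (norm_nonneg _)
  refine norm_le_zero_iff.1 (le_of_forall_pos_le_add fun ε hε ↦ ?_)
  have hδ : 0 < ε / (C + 1) := by positivity
  calc ‖∫ x in S, φ x • g x ∂μ‖ ≤ ε / (C + 1) * C := approx _ hδ
    _ ≤ ε / (C + 1) * (C + 1) := by gcongr; linarith
    _ = 0 + ε := by field_simp; ring

theorem ae_eq_zero_of_integral_pow_smul_eq_zero [CompleteSpace E] (hS : Bornology.IsBounded S)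
    (hSm : MeasurableSet S) (hg : IntegrableOn g S μ)
    (hmom : ∀ n : ℕ, ∫ x in S, x ^ n • g x ∂μ = 0) : g =ᵐ[μ.restrict S] 0 :=
  ae_eq_zero_of_integral_contDiff_smul_eq_zero hg.locallyIntegrable fun _ hφ _ ↦
    integral_smul_eq_zero_of_integral_pow_smul_eq_zero hS hSm hg hmom hφ.continuous

end Moments

section ExpNegSubst

variable {E : Type*} [NormedAddCommGroup E] [NormedSpace ℝ E]

theorem integral_comp_exp_neg_Ioi (g : ℝ → E) :
    ∫ t in Ioi 0, exp (-t) • g (exp (-t)) = ∫ u in Ioo 0 1, g u := by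
  have himage : (fun t ↦ exp (-t)) '' Ioi 0 = Ioo 0 1 := by
    ext u
    constructor
    · rintro ⟨t, ht, rfl⟩
      exact ⟨exp_pos _, exp_lt_one_iff.2 (neg_neg_iff_pos.2 ht)⟩
    · rintro ⟨hu0, hu1⟩
      exact ⟨-log u, neg_pos.2 (log_neg hu0 hu1), by simp [exp_log hu0]⟩
  rw [← himage, integral_image_eq_integral_abs_deriv_smul measurableSet_Ioi
    (fun t _ ↦ (hasDerivAt_neg t).exp.hasDerivWithinAt)
    (fun s _ t _ hst ↦ neg_injective (exp_injective hst))]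
  simp [abs_of_pos (exp_pos _)]

noncomputable def expNegSubst (a : ℝ) (f : ℝ → E) (u : ℝ) : E :=
  exp (a * log u) • f (-log u)

theorem expNegSubst_exp_neg (a : ℝ) (f : ℝ → E) (t : ℝ) :
    expNegSubst a f (exp (-t)) = exp (-(a * t)) • f t := by
  simp [expNegSubst]

theorem integral_pow_smul_expNegSubst (a : ℝ) (f : ℝ → E) (n : ℕ) :
    ∫ u in Ioo 0 1, u ^ n • expNegSubst a f u = ∫ t in Ioi 0, exp (-(n + a + 1) * t) • f t := by
  rw [← integral_comp_exp_neg_Ioi]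
  congr 1 with t
  rw [expNegSubst_exp_neg, smul_smul, smul_smul, ← exp_nat_mul, ← exp_add, ← exp_add]
  ring_nf

theorem continuousOn_expNegSubst (a : ℝ) {f : ℝ → E} (hf : ContinuousOn f (Ioi 0)) :
    ContinuousOn (expNegSubst a f) (Ioo 0 1) := by
  have hlog : ContinuousOn log (Ioo 0 1) := continuousOn_log.mono fun u hu ↦ hu.1.ne'
  refine ((continuousOn_const.mul hlog).rexp).smul (hf.comp hlog.neg fun u hu ↦ ?_)
  exact neg_pos.2 (log_neg hu.1 hu.2)

theorem norm_expNegSubst_le {a M : ℝ} {f : ℝ → E}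
    (hbound : ∀ t ≥ (0 : ℝ), ‖f t‖ ≤ M * exp (a * t)) {u : ℝ} (hu : u ∈ Ioo 0 1) :
    ‖expNegSubst a f u‖ ≤ M := by
  obtain ⟨t, ht, rfl⟩ : ∃ t, 0 < t ∧ exp (-t) = u :=
    ⟨-log u, neg_pos.2 (log_neg hu.1 hu.2), by simp [exp_log hu.1]⟩
  calc ‖expNegSubst a f (exp (-t))‖ = exp (-(a * t)) * ‖f t‖ := by
        rw [expNegSubst_exp_neg, norm_smul, norm_of_nonneg (exp_pos _).le]
    _ ≤ exp (-(a * t)) * (M * exp (a * t)) := by gcongr; exact hbound t ht.le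
    _ = M := by rw [mul_left_comm, ← exp_add, neg_add_cancel, exp_zero, mul_one]

theorem integrableOn_expNegSubst {a M : ℝ} {f : ℝ → E} (hf : ContinuousOn f (Ioi 0))
    (hbound : ∀ t ≥ (0 : ℝ), ‖f t‖ ≤ M * exp (a * t)) :
    IntegrableOn (expNegSubst a f) (Ioo 0 1) :=
  .of_bound measure_Ioo_lt_top
    ((continuousOn_expNegSubst a hf).aestronglyMeasurable measurableSet_Ioo) M
    (ae_restrict_of_forall_mem measurableSet_Ioo fun _ ↦ norm_expNegSubst_le hbound)

end ExpNegSubst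

/-- Injectivity of the Laplace transform on exponentially bounded continuous
functions: if `f : [0,∞) → ℂ` is continuous, `|f t| ≤ M exp (a t)`, and
`∫₀^∞ exp (-λ t) f t dt = 0` for every real `λ > a`, then `f ≡ 0` on `[0,∞)`. -/
theorem laplace_transform_injective
    (f : ℝ → ℂ) (M a : ℝ)
    (hf : ContinuousOn f (Set.Ici 0))
    (hbound : ∀ t ≥ (0 : ℝ), ‖f t‖ ≤ M * Real.exp (a * t))
    (hvanish : ∀ l : ℝ, a < l →
        (∫ t in Set.Ioi (0 : ℝ), Real.exp (-l * t) • f t) = 0) :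
    ∀ t ≥ (0 : ℝ), f t = 0 := by
  have hf_pos : ContinuousOn f (Ioi 0) := hf.mono Ioi_subset_Ici_self
  have hmom : ∀ n : ℕ, ∫ u in Ioo 0 1, u ^ n • expNegSubst a f u = 0 := fun n ↦ by
    rw [integral_pow_smul_expNegSubst]
    exact hvanish _ (by linarith [n.cast_nonneg (α := ℝ)])
  have hsubst_zero : EqOn (expNegSubst a f) 0 (Ioo 0 1) :=
    volume.eqOn_Ioo_of_ae_eq
      (ae_eq_zero_of_integral_pow_smul_eq_zero (Metric.isBounded_Ioo 0 1) measurableSet_Ioo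
        (integrableOn_expNegSubst hf_pos hbound) hmom)
      (continuousOn_expNegSubst a hf_pos) continuousOn_const
  have hf_zero : EqOn f 0 (Ioi 0) := fun t ht ↦ by
    have h := hsubst_zero ⟨exp_pos (-t), exp_lt_one_iff.2 (neg_neg_iff_pos.2 ht)⟩
    rw [expNegSubst_exp_neg] at h
    exact (smul_eq_zero.1 h).resolve_left (exp_pos _).ne'
  intro t ht
  exact hf_zero.of_subset_closure hf continuousOn_const Ioi_subset_Ici_self
    (closure_Ioi (0 : ℝ)).ge ht
end
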